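/- For every integer p ≥ 0, the sum over i from 1 to p of i·C(2p+3, 2i+1) equals (2p+1)·2^(2p) - p - 1. -/

import Mathlib

/-!
Write `n = 2p + 3`. By Pascal's rule the odd-indexed entries of a row of Pascal's triangle add
up to the whole previous row, so they sum to a power of two; so do the even-indexed ones.
Absorption, `(2i + 1) C(n, 2i + 1) = n C(n - 1, 2i)`, turns the odd-weighted odd sum into an even
sum of the previous row. Writing `2i = (2i + 1) - 1` gives `∑_{i ≤ p + 1} i C(n, 2i + 1) =
(2p + 1) 4^p`, and the term `i = p + 1` contributes `p + 1`.
-/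

open Finset

theorem sum_range_two_mul {M : Type*} [AddCommMonoid M] (f : ℕ → M) (m : ℕ) :
    ∑ k ∈ range (2 * m), f k = ∑ i ∈ range m, f (2 * i) + ∑ i ∈ range m, f (2 * i + 1) := by
  induction m with
  | zero => simp
  | succ m ih =>
    rw [mul_add_one, sum_range_succ, sum_range_succ, ih, sum_range_succ, sum_range_succ]
    abel

namespace Nat

theorem sum_range_choose_of_lt {n M : ℕ} (h : n < M) : ∑ k ∈ range M, n.choose k = 2 ^ n := by
  rw [← sum_range_choose, eq_comm]
  refine sum_subset (range_subset_range.2 h) fun k _ hk ↦ choose_eq_zero_of_lt ?_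
  simpa using hk

theorem sum_range_choose_odd {n m : ℕ} (h : n < 2 * m) :
    ∑ i ∈ range m, (n + 1).choose (2 * i + 1) = 2 ^ n := by
  simp_rw [choose_succ_succ', sum_add_distrib, ← sum_range_two_mul, sum_range_choose_of_lt h]

theorem sum_range_choose_even {n m : ℕ} (h : n + 1 < 2 * m) :
    ∑ i ∈ range m, (n + 1).choose (2 * i) = 2 ^ n := by
  have total := sum_range_choose_of_lt h
  rw [sum_range_two_mul, sum_range_choose_odd (by omega), pow_succ] at total
  omega

theorem sum_range_odd_mul_choose_odd {n m : ℕ} (h : n + 1 < 2 * m) :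
    ∑ i ∈ range m, (2 * i + 1) * (n + 2).choose (2 * i + 1) = (n + 2) * 2 ^ n := by
  rw [← sum_range_choose_even h, mul_sum]
  refine sum_congr rfl fun i _ ↦ ?_
  rw [add_one_mul_choose_eq (n + 1) (2 * i), mul_comm]

theorem sum_range_mul_choose_odd (p : ℕ) :
    ∑ i ∈ range (p + 2), i * (2 * p + 3).choose (2 * i + 1) = (2 * p + 1) * 2 ^ (2 * p) := by
  have weighted := sum_range_odd_mul_choose_odd (n := 2 * p + 1) (m := p + 2) (by omega)
  have plain := sum_range_choose_odd (n := 2 * p + 2) (m := p + 2) (by omega)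
  simp_rw [add_mul, one_mul, sum_add_distrib, mul_assoc, ← mul_sum, plain] at weighted
  ring_nf at weighted ⊢
  linarith

end Nat

theorem sum_i_choose_odd_odd (p : ℕ) :
    ∑ i ∈ Finset.Icc 1 p, (i : ℤ) * Nat.choose (2 * p + 3) (2 * i + 1) =
      (2 * (p : ℤ) + 1) * 2 ^ (2 * p) - p - 1 := by
  have hsplit : ∑ i ∈ range (p + 2), i * (2 * p + 3).choose (2 * i + 1)
      = ∑ i ∈ Icc 1 p, i * (2 * p + 3).choose (2 * i + 1) + (p + 1) := by
    rw [sum_range_succ, range_eq_Ico, sum_eq_sum_Ico_succ_bot (by omega), Ico_add_one_right_eq_Icc]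
    simp [show 2 * (p + 1) + 1 = 2 * p + 3 by ring]
  have h := Nat.sum_range_mul_choose_odd p
  rw [hsplit] at h
  have hz : ∑ i ∈ Icc 1 p, (i : ℤ) * (2 * p + 3).choose (2 * i + 1) + (p + 1)
      = (2 * p + 1) * 2 ^ (2 * p) := by
    exact_mod_cast h
  linarith
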